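/- arXiv:math/0112101 — 4 statements merged into one kernel-verified Lean document; each statement's English description precedes it below -/
import Mathlib

section
/- With $D : k \to (k \otimes_{\mathbb{Z}} k^\times)/\mathcal{R}$ defined by $D(a) = a \otimes a$ for $a \neq 0$, $D(0) = 0$, one has the Leibniz rule $D(ab) = a \cdot D(b) + b \cdot D(a)$ for all $a, b \in k$, where $c \cdot (x \otimes y) = (cx) \otimes y$ denotes the $k$-action. -/
open TensorProduct
open scoped Classical

/-- The element `a ⊗ a` of `k ⊗[ℤ] kˣ` (first factor additive, second multiplicative),
with the convention that it is `0` when `a = 0`. -/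
noncomputable def tensorDiag (k : Type*) [Field k] (a : k) : k ⊗[ℤ] Additive kˣ :=
  if h : a = 0 then 0 else a ⊗ₜ[ℤ] Additive.ofMul (Units.mk0 a h)

/-- The `k`-subspace `𝓡` of `k ⊗[ℤ] kˣ` spanned by the elements
`a ⊗ a - (1+a) ⊗ (1+a)` for `a ∈ k` (with the convention that a tensor whose
entry vanishes is `0`); the `k`-structure is via multiplication on the first factor. -/
noncomputable def relSub (k : Type*) [Field k] : Submodule k (k ⊗[ℤ] Additive kˣ) :=
  Submodule.span k {x | ∃ a : k, x = tensorDiag k a - tensorDiag k (1 + a)}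

/-- The Leibniz identity already holds in the tensor product itself, before
passing to the quotient: `(ab) ⊗ (ab) = ab ⊗ a + ab ⊗ b`. -/
lemma tensorDiag_mul {k : Type*} [Field k] (a b : k) :
    tensorDiag k (a * b) = a • tensorDiag k b + b • tensorDiag k a := by
  by_cases ha : a = 0
  · simp [ha, tensorDiag]
  by_cases hb : b = 0
  · simp [hb, tensorDiag]
  have hab : a * b ≠ 0 := mul_ne_zero ha hb
  simp only [tensorDiag, dif_neg ha, dif_neg hb, dif_neg hab]
  have : Units.mk0 (a * b) hab = Units.mk0 a ha * Units.mk0 b hb := by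
    ext; simp
  rw [this]
  rw [show Additive.ofMul (Units.mk0 a ha * Units.mk0 b hb)
      = Additive.ofMul (Units.mk0 a ha) + Additive.ofMul (Units.mk0 b hb) from rfl,
    tmul_add]
  rw [smul_tmul', smul_tmul', smul_eq_mul, smul_eq_mul, mul_comm b a]
  abel

/-- the map `D : k → (k ⊗[ℤ] kˣ)/𝓡`, `D a = class of a ⊗ a` (and `D 0 = 0`),
satisfies the Leibniz rule `D (a * b) = a • D b + b • D a`, where the `k`-action is via
multiplication on the first tensor factor. -/
theorem stmt1 {k : Type*} [Field k] (a b : k) :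
    (Submodule.Quotient.mk (p := relSub k) (tensorDiag k (a * b))) =
      a • Submodule.Quotient.mk (p := relSub k) (tensorDiag k b) +
        b • Submodule.Quotient.mk (p := relSub k) (tensorDiag k a) := by
  rw [tensorDiag_mul, Submodule.Quotient.mk_add, Submodule.Quotient.mk_smul,
    Submodule.Quotient.mk_smul]
end

section
/- With notation as above, the residue of $\gamma_n$ along the hyperplane $v_i = 0$ equals $(-1)^i \gamma_{n-1}$ for $1 \le i \le n+1$, and the residue of $\gamma_n$ along $v_0 = 0$ equals $\gamma_{n-1}$, where $\gamma_{n-1}$ is the analogous form in the remaining variables (with the residual linear relation among them). -/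
set_option maxHeartbeats 1000000
set_option synthInstance.maxHeartbeats 400000

open ExteriorAlgebra

noncomputable section

variable (k : Type*) [Field k] (n : ℕ)

/-- The polynomial ring `k[v₁, …, v_{n+2}]` (the function field of `Q^{n+2}` is its
fraction field; `v₀ = -(v₁ + ⋯ + v_{n+2})` is the dependent coordinate). -/
abbrev QPoly := MvPolynomial (Fin (n + 2)) k

/-- The function field of the hyperplane `∑ᵢ vᵢ = 0`. -/
abbrev QFld := FractionRing (QPoly k n)

/-- The coordinates `v₁, …, v_{n+2}`. -/
def vc (i : Fin (n + 2)) : QFld k n := algebraMap (QPoly k n) _ (MvPolynomial.X i)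

/-- The full family `v₀, v₁, …, v_{n+2}`, `v₀ = -(v₁ + ⋯ + v_{n+2})`. -/
def Vc : Fin (n + 3) → QFld k n := Fin.cons (-∑ i, vc k n i) (vc k n)

/-- `dlog f = f⁻¹ • df`. -/
def dlogQ (f : QFld k n) : Ω[QFld k n⁄k] := f⁻¹ • KaehlerDifferential.D k (QFld k n) f

/-- Rational functions regular along the hyperplane `p = 0`: those expressible
with a denominator not divisible by `p`. -/
def regFun (p : QPoly k n) : Set (QFld k n) :=
  {x | ∃ f g : QPoly k n, ¬ p ∣ g ∧
    x * algebraMap (QPoly k n) (QFld k n) g = algebraMap (QPoly k n) (QFld k n) f}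

/-- `(n+1)`-forms regular along the hyperplane `p = 0`: sums of forms
`c·df₁ ∧ ⋯ ∧ df_{n+1}` with `c` and all `fⱼ` regular along `p = 0`
(viewed inside the exterior algebra of `Ω¹_{K/k}`).  The residue along `p = 0` of a
form `dlog p ∧ α + β` with `α, β` regular is `α|_{p=0}`. -/
def regForm (p : QPoly k n) : AddSubgroup (ExteriorAlgebra (QFld k n) (Ω[QFld k n⁄k])) :=
  AddSubgroup.closure
    {ω | ∃ (c : QFld k n) (f : Fin (n + 1) → QFld k n), c ∈ regFun k n p ∧
      (∀ j, f j ∈ regFun k n p) ∧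
      ω = c • ιMulti (QFld k n) (n + 1)
        (fun j => KaehlerDifferential.D k (QFld k n) (f j))}

/-- The form `γ_{n+1} = (1/v₀) ∑_{i=1}^{n+2} (-1)^i dlog v₁ ∧ ⋯ ∧ ∂ᵢ ∧ ⋯ ∧ dlog v_{n+2}`. -/
def gammaForm : ExteriorAlgebra (QFld k n) (Ω[QFld k n⁄k]) :=
  (Vc k n 0)⁻¹ • ∑ i : Fin (n + 2), ((-1 : ℤ) ^ ((i : ℕ) + 1)) •
    ιMulti (QFld k n) (n + 1) (fun j : Fin (n + 1) => dlogQ k n (vc k n (i.succAbove j)))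


/-! ### general helpers -/

section Helpers

theorem pow_neg_one_congr {R : Type*} [Ring R] (a b : ℕ) (h : a % 2 = b % 2) :
    ((-1:R)^a) = (-1)^b := by
  rw [← Nat.div_add_mod a 2, ← Nat.div_add_mod b 2, pow_add, pow_add, pow_mul, pow_mul]
  simp [h]

theorem val_succAbove' {N : ℕ} (a : Fin (N+1)) (b : Fin N) :
    (a.succAbove b : ℕ) = if (b:ℕ) < (a:ℕ) then (b:ℕ) else (b:ℕ)+1 := by
  rw [Fin.succAbove]
  split_ifs with h1 h2 h2 <;> simp_all [Fin.lt_def]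

theorem lemB {N : ℕ} (i : Fin (N+2)) (l : Fin (N+1)) :
    ∃ p : Fin (N+1), (i.succAbove l).succAbove p = i ∧
      (∀ j : Fin N, (i.succAbove l).succAbove (p.succAbove j) = i.succAbove (l.succAbove j)) ∧
      ((p:ℕ) + ((i.succAbove l : Fin (N+2)):ℕ)) % 2 = ((i:ℕ) + (l:ℕ) + 1) % 2 := by
  have hi : (i:ℕ) < N+2 := i.isLt
  have hl : (l:ℕ) < N+1 := l.isLt
  have hm : ((i.succAbove l : Fin (N+2)):ℕ) = if (l:ℕ) < (i:ℕ) then (l:ℕ) else (l:ℕ)+1 :=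
    val_succAbove' i l
  by_cases h : (l:ℕ) < (i:ℕ)
  case pos =>
    rw [if_pos h] at hm
    refine ⟨⟨(i:ℕ)-1, by omega⟩, ?_, ?_, ?_⟩
    · apply Fin.ext
      simp only [val_succAbove', Fin.val_mk, hm]
      split_ifs <;> omega
    · intro j
      have hj : (j:ℕ) < N := j.isLt
      apply Fin.ext
      simp only [val_succAbove', Fin.val_mk, hm]
      split_ifs <;> omega
    · simp only [Fin.val_mk, hm]; omega
  case neg =>
    rw [if_neg h] at hm
    refine ⟨⟨(i:ℕ), by omega⟩, ?_, ?_, ?_⟩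
    · apply Fin.ext
      simp only [val_succAbove', Fin.val_mk, hm]
      split_ifs <;> omega
    · intro j
      have hj : (j:ℕ) < N := j.isLt
      apply Fin.ext
      simp only [val_succAbove', Fin.val_mk, hm]
      split_ifs <;> omega
    · simp only [Fin.val_mk, hm]; omega

variable {R M N : Type*} [CommRing R] [AddCommGroup M] [Module R M]
  [AddCommGroup N] [Module R N] {m : ℕ}

theorem altCons (f : M [⋀^Fin (m+1)]→ₗ[R] N) (w : Fin (m+1) → M) (p : Fin (m+1)) :
    f (Fin.cons (w p) (fun j : Fin m => w (p.succAbove j))) = ((-1 : ℤ) ^ (p : ℕ)) • f w := by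
  have h : (Fin.cons (w p) (fun j : Fin m => w (p.succAbove j)) : Fin (m+1) → M)
      = w ∘ (p.cycleRange.symm : Equiv.Perm (Fin (m+1))) := by
    funext j
    induction j using Fin.cases with
    | zero => simp [Fin.cycleRange_symm_zero]
    | succ j => simp [Fin.cycleRange_symm_succ]
  rw [h, AlternatingMap.map_perm, Equiv.Perm.sign_symm, Fin.sign_cycleRange]
  simp [Units.smul_def]

theorem altConsSmul (f : M [⋀^Fin (m+1)]→ₗ[R] N) (c : R) (x : M) (t : Fin m → M) :
    f (Fin.cons (c • x) t) = c • f (Fin.cons x t) :=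
  f.toMultilinearMap.cons_smul t c x

theorem altConsSum (f : M [⋀^Fin (m+1)]→ₗ[R] N) {α : Type*} (s : Finset α) (g : α → M)
    (t : Fin m → M) :
    f (Fin.cons (∑ a ∈ s, g a) t) = ∑ a ∈ s, f (Fin.cons (g a) t) := by
  have h : ∀ x : M, (Fin.cons x t : Fin (m+1) → M) = Function.update (Fin.cons (0:M) t) 0 x :=
    fun x => (Fin.update_cons_zero _ _ _).symm
  rw [h, AlternatingMap.map_update_sum]
  exact Finset.sum_congr rfl (fun a _ => by rw [← h])

end Helpers

/-! ### divisibility -/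

open MvPolynomial in
theorem sumX_ne_zero {ι : Type*} [Fintype ι] [Nonempty ι] (e : ι → Fin (n+2))
    (he : Function.Injective e) : (∑ j : ι, X (e j) : QPoly k n) ≠ 0 := by
  intro h
  have := congrArg (coeff (Finsupp.single (e (Classical.arbitrary ι)) 1)) h
  rw [coeff_zero, coeff_sum] at this
  simp only [coeff_X'] at this
  rw [Finset.sum_eq_single (Classical.arbitrary ι)] at this
  · simp at this
  · intro b _ hb
    rw [if_neg]
    intro hc
    exact hb (he (Finsupp.single_left_injective (one_ne_zero (α := ℕ)) hc))
  · simp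

open MvPolynomial in
theorem not_dvd_part1 (i : Fin (n+2)) :
    ¬ (X i : QPoly k n) ∣ (∑ m, X m) * ∏ j : Fin (n+1), X (i.succAbove j) := by
  intro ⟨q, hq⟩
  set φ : QPoly k n →ₐ[k] QPoly k n :=
    aeval (fun m => if m = i then 0 else X m) with hφ
  have h0 : φ (X i) = 0 := by simp [hφ]
  have := congrArg φ hq
  rw [map_mul, map_mul, h0, zero_mul, map_sum] at this
  have h1 : (∑ m, φ (X m)) = ∑ j : Fin (n+1), X (i.succAbove j) := by
    rw [Fin.sum_univ_succAbove _ i]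
    simp [hφ, Fin.succAbove_ne]
  have h2 : φ (∏ j : Fin (n+1), X (i.succAbove j)) = ∏ j : Fin (n+1), X (i.succAbove j) := by
    rw [map_prod]
    simp [hφ, Fin.succAbove_ne]
  rw [h1, h2] at this
  have hs : (∑ j : Fin (n+1), X (i.succAbove j) : QPoly k n) ≠ 0 :=
    sumX_ne_zero k n _ (Fin.succAbove_right_injective)
  have hp : (∏ j : Fin (n+1), X (i.succAbove j) : QPoly k n) ≠ 0 :=
    Finset.prod_ne_zero_iff.2 (fun j _ => X_ne_zero _)
  exact mul_ne_zero hs hp this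

open MvPolynomial in
theorem not_dvd_part2 :
    ¬ (∑ m, X m : QPoly k n) ∣ ∏ m, X m := by
  intro ⟨q, hq⟩
  set φ : QPoly k n →ₐ[k] QPoly k n :=
    aeval (Fin.cons (-(∑ j : Fin (n+1), X j.succ)) (fun j : Fin (n+1) => X j.succ)) with hφ
  have h0 : φ (∑ m, X m) = 0 := by
    rw [map_sum, Fin.sum_univ_succ]
    simp [hφ]
  have := congrArg φ hq
  rw [map_mul, h0, zero_mul, map_prod, Fin.prod_univ_succ] at this
  simp only [hφ, aeval_X, Fin.cons_zero, Fin.cons_succ] at this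
  have hs : (∑ j : Fin (n+1), X j.succ : QPoly k n) ≠ 0 :=
    sumX_ne_zero k n _ (Fin.succ_injective _)
  have hp : (∏ j : Fin (n+1), X j.succ : QPoly k n) ≠ 0 :=
    Finset.prod_ne_zero_iff.2 (fun j _ => X_ne_zero _)
  exact (mul_ne_zero (neg_ne_zero.2 hs) hp) this

/-! ### basic nonvanishing -/

theorem aM_inj : Function.Injective (algebraMap (QPoly k n) (QFld k n)) :=
  IsFractionRing.injective _ _

theorem aM_ne_zero {x : QPoly k n} (hx : x ≠ 0) :
    algebraMap (QPoly k n) (QFld k n) x ≠ 0 := by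
  intro h
  exact hx (aM_inj k n (by rw [h, map_zero]))

theorem vc_ne_zero (m : Fin (n+2)) : vc k n m ≠ 0 :=
  aM_ne_zero k n (MvPolynomial.X_ne_zero m)

theorem Vc0_eq : Vc k n 0 = -algebraMap (QPoly k n) (QFld k n) (∑ m, MvPolynomial.X m) := by
  simp [Vc, vc, map_sum]

theorem Vc0_ne_zero : Vc k n 0 ≠ 0 := by
  rw [Vc0_eq]
  exact neg_ne_zero.2 (aM_ne_zero k n (sumX_ne_zero k n _ Function.injective_id))

theorem D_vc (m : Fin (n+2)) :
    KaehlerDifferential.D k (QFld k n) (vc k n m) = vc k n m • dlogQ k n (vc k n m) := by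
  rw [dlogQ, smul_smul, mul_inv_cancel₀ (vc_ne_zero k n m), one_smul]

theorem sum_vc_succ :
    (∑ l : Fin (n+1), vc k n l.succ) = -(Vc k n 0) - vc k n 0 := by
  have h1 : Vc k n 0 = -∑ m : Fin (n+2), vc k n m := by simp [Vc]
  have h2 : ∑ m : Fin (n+2), vc k n m = vc k n 0 + ∑ l : Fin (n+1), vc k n l.succ :=
    Fin.sum_univ_succ _
  rw [h1, h2]
  ring

/-! ### regularity -/

theorem reg_vc (p : QPoly k n) (hp : ¬ p ∣ 1) (m : Fin (n+2)) : vc k n m ∈ regFun k n p :=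
  ⟨MvPolynomial.X m, 1, hp, by simp [vc]⟩

theorem reg_c1 (i : Fin (n+2)) :
    (Vc k n 0)⁻¹ * ∏ j : Fin (n+1), (vc k n (i.succAbove j))⁻¹
      ∈ regFun k n (MvPolynomial.X i) := by
  refine ⟨-1, (∑ m, MvPolynomial.X m) * ∏ j : Fin (n+1), MvPolynomial.X (i.succAbove j),
    not_dvd_part1 k n i, ?_⟩
  have hA : algebraMap (QPoly k n) (QFld k n) (∑ m, MvPolynomial.X m) ≠ 0 :=
    aM_ne_zero k n (sumX_ne_zero k n _ Function.injective_id)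
  have hB : ∀ j : Fin (n+1), vc k n (i.succAbove j) ≠ 0 := fun j => vc_ne_zero k n _
  rw [Vc0_eq, map_mul, map_prod]
  show ((-algebraMap (QPoly k n) (QFld k n) (∑ m, MvPolynomial.X m))⁻¹ *
      ∏ j : Fin (n+1), (vc k n (i.succAbove j))⁻¹) *
      (algebraMap (QPoly k n) (QFld k n) (∑ m, MvPolynomial.X m) *
        ∏ j : Fin (n+1), vc k n (i.succAbove j)) = _
  rw [inv_neg, map_neg, map_one, Finset.prod_inv_distrib]
  have hP : (∏ j : Fin (n+1), vc k n (i.succAbove j)) ≠ 0 :=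
    Finset.prod_ne_zero_iff.2 (fun j _ => hB j)
  set S := algebraMap (QPoly k n) (QFld k n) (∑ m, MvPolynomial.X m)
  set P := ∏ j : Fin (n+1), vc k n (i.succAbove j)
  have key : (S⁻¹ * P⁻¹) * (S * P) = 1 := by
    rw [mul_mul_mul_comm, inv_mul_cancel₀ hA, inv_mul_cancel₀ hP, one_mul]
  calc (-S⁻¹ * P⁻¹) * (S * P) = -((S⁻¹ * P⁻¹) * (S * P)) := by ring
  _ = -1 := by rw [key]

theorem reg_c2 :
    (vc k n 0)⁻¹ * ∏ j : Fin (n+1), (vc k n j.succ)⁻¹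
      ∈ regFun k n (∑ m, MvPolynomial.X m) := by
  refine ⟨1, ∏ m, MvPolynomial.X m, not_dvd_part2 k n, ?_⟩
  rw [map_prod, map_one]
  show ((vc k n 0)⁻¹ * ∏ j : Fin (n+1), (vc k n j.succ)⁻¹) *
      (∏ m : Fin (n+2), vc k n m) = 1
  have hsplit : (∏ m : Fin (n+2), vc k n m) = vc k n 0 * ∏ j : Fin (n+1), vc k n j.succ :=
    Fin.prod_univ_succ _
  rw [hsplit]
  have h0 : vc k n 0 ≠ 0 := vc_ne_zero k n 0
  have hP : (∏ j : Fin (n+1), vc k n j.succ) ≠ 0 :=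
    Finset.prod_ne_zero_iff.2 (fun j _ => vc_ne_zero k n _)
  rw [Finset.prod_inv_distrib, mul_mul_mul_comm, inv_mul_cancel₀ h0, inv_mul_cancel₀ hP, one_mul]

theorem mem_regForm (p : QPoly k n) (hp : ¬ p ∣ 1) (c0 : QFld k n) (e : Fin (n+1) → Fin (n+2))
    (hc : c0 * ∏ j : Fin (n+1), (vc k n (e j))⁻¹ ∈ regFun k n p) :
    c0 • ιMulti (QFld k n) (n+1) (fun j : Fin (n+1) => dlogQ k n (vc k n (e j)))
      ∈ regForm k n p := by
  apply AddSubgroup.subset_closure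
  refine ⟨c0 * ∏ j : Fin (n+1), (vc k n (e j))⁻¹, fun j => vc k n (e j), hc,
    fun j => reg_vc k n p hp _, ?_⟩
  have h1 : (fun j : Fin (n+1) => dlogQ k n (vc k n (e j)))
      = fun j => (vc k n (e j))⁻¹ • KaehlerDifferential.D k (QFld k n) (vc k n (e j)) := rfl
  have h2 := (ιMulti (QFld k n) (n+1)).toMultilinearMap.map_smul_univ
    (fun j : Fin (n+1) => (vc k n (e j))⁻¹)
    (fun j : Fin (n+1) => KaehlerDifferential.D k (QFld k n) (vc k n (e j)))
  simp only [AlternatingMap.coe_multilinearMap] at h2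
  rw [h1, h2, smul_smul]


theorem zsmul_to_ksmul (e : ℕ) (x : ExteriorAlgebra (QFld k n) (Ω[QFld k n⁄k])) :
    ((-1:ℤ)^e) • x = ((-1:QFld k n)^e) • x := by
  have h : (((-1:ℤ)^e : ℤ) : QFld k n) = (-1:QFld k n)^e := by push_cast; ring
  rw [← h, Int.cast_smul_eq_zsmul]

theorem key2 (l : Fin (n+1)) :
    ιMulti (QFld k n) (n+1)
      (Fin.cons (dlogQ k n (Vc k n 0))
        (fun j : Fin n => dlogQ k n (vc k n ((l.succAbove j).succ))))
    = (-((Vc k n 0)⁻¹ * vc k n 0)) • ιMulti (QFld k n) (n+1)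
        (Fin.cons (dlogQ k n (vc k n 0))
          (fun j : Fin n => dlogQ k n (vc k n ((l.succAbove j).succ))))
      + (-((Vc k n 0)⁻¹ * vc k n l.succ) * (-1:QFld k n)^(l:ℕ)) • ιMulti (QFld k n) (n+1)
        (fun j : Fin (n+1) => dlogQ k n (vc k n j.succ)) := by
  have hu : Vc k n 0 ≠ 0 := Vc0_ne_zero k n
  have hDu : KaehlerDifferential.D k (QFld k n) (Vc k n 0)
      = ∑ m : Fin (n+2), -(vc k n m • dlogQ k n (vc k n m)) := by
    have h0 : Vc k n 0 = -∑ m : Fin (n+2), vc k n m := by simp [Vc]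
    rw [h0, map_neg, map_sum, ← Finset.sum_neg_distrib]
    exact Finset.sum_congr rfl (fun m _ => by rw [D_vc])
  have hvanish : ∀ b : Fin (n+1), b ≠ l →
      ιMulti (QFld k n) (n+1) (Fin.cons (dlogQ k n (vc k n b.succ))
        (fun j : Fin n => dlogQ k n (vc k n ((l.succAbove j).succ)))) = 0 := by
    intro b hb
    obtain ⟨z, hz⟩ := Fin.exists_succAbove_eq hb
    have hvv : (Fin.cons (dlogQ k n (vc k n b.succ))
        (fun j : Fin n => dlogQ k n (vc k n ((l.succAbove j).succ))) : Fin (n+1) → _) 0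
        = (Fin.cons (dlogQ k n (vc k n b.succ))
            (fun j : Fin n => dlogQ k n (vc k n ((l.succAbove j).succ))) : Fin (n+1) → _) z.succ := by
      rw [Fin.cons_zero, Fin.cons_succ, hz]
    exact AlternatingMap.map_eq_zero_of_eq _ _ hvv (Fin.succ_ne_zero z).symm
  have hY : ιMulti (QFld k n) (n+1) (Fin.cons (dlogQ k n (vc k n l.succ))
        (fun j : Fin n => dlogQ k n (vc k n ((l.succAbove j).succ))))
      = ((-1:ℤ)^(l:ℕ)) • ιMulti (QFld k n) (n+1)
          (fun j : Fin (n+1) => dlogQ k n (vc k n j.succ)) :=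
    altCons (ιMulti (QFld k n) (n+1)) (fun j : Fin (n+1) => dlogQ k n (vc k n j.succ)) l
  calc ιMulti (QFld k n) (n+1) (Fin.cons (dlogQ k n (Vc k n 0))
        (fun j : Fin n => dlogQ k n (vc k n ((l.succAbove j).succ))))
      = (Vc k n 0)⁻¹ • ιMulti (QFld k n) (n+1)
          (Fin.cons (KaehlerDifferential.D k (QFld k n) (Vc k n 0))
            (fun j : Fin n => dlogQ k n (vc k n ((l.succAbove j).succ)))) := by
        rw [show dlogQ k n (Vc k n 0)
            = (Vc k n 0)⁻¹ • KaehlerDifferential.D k (QFld k n) (Vc k n 0) from rfl,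
          altConsSmul]
    _ = (Vc k n 0)⁻¹ • ∑ m : Fin (n+2),
          ιMulti (QFld k n) (n+1) (Fin.cons (-(vc k n m • dlogQ k n (vc k n m)))
            (fun j : Fin n => dlogQ k n (vc k n ((l.succAbove j).succ)))) := by
        rw [hDu, altConsSum]
    _ = (Vc k n 0)⁻¹ • ∑ m : Fin (n+2),
          (-(vc k n m)) • ιMulti (QFld k n) (n+1) (Fin.cons (dlogQ k n (vc k n m))
            (fun j : Fin n => dlogQ k n (vc k n ((l.succAbove j).succ)))) := by
        congr 1
        refine Finset.sum_congr rfl (fun m _ => ?_)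
        rw [show (-(vc k n m • dlogQ k n (vc k n m))) = (-(vc k n m)) • dlogQ k n (vc k n m) from
          (neg_smul _ _).symm, altConsSmul]
    _ = (Vc k n 0)⁻¹ •
          ((-(vc k n 0)) • ιMulti (QFld k n) (n+1) (Fin.cons (dlogQ k n (vc k n 0))
            (fun j : Fin n => dlogQ k n (vc k n ((l.succAbove j).succ))))
          + (-(vc k n l.succ)) • ιMulti (QFld k n) (n+1)
              (Fin.cons (dlogQ k n (vc k n l.succ))
                (fun j : Fin n => dlogQ k n (vc k n ((l.succAbove j).succ))))) := by
        rw [Fin.sum_univ_succ]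
        congr 1
        rw [Finset.sum_eq_single l (fun b _ hb => by rw [hvanish b hb, smul_zero]) (by simp)]
    _ = _ := by
        rw [hY, zsmul_to_ksmul, smul_add, smul_smul, smul_smul, smul_smul]
        congr 1
        · congr 1
          ring
        · congr 1
          ring

theorem part2 : ∃ β ∈ regForm k n (∑ j, MvPolynomial.X j),
    gammaForm k n =
      (vc k n 0)⁻¹ • ∑ l : Fin (n + 1), ((-1 : ℤ) ^ ((l : ℕ) + 1)) •
        ιMulti (QFld k n) (n + 1)
          (Fin.cons (dlogQ k n (Vc k n 0))
            (fun j : Fin n => dlogQ k n (vc k n ((l.succAbove j).succ)))) +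
        β := by
  have hd2 : ¬ (∑ m, MvPolynomial.X m : QPoly k n) ∣ 1 :=
    fun h => not_dvd_part2 k n (h.trans (one_dvd _))
  have hu : Vc k n 0 ≠ 0 := Vc0_ne_zero k n
  have h0 : vc k n 0 ≠ 0 := vc_ne_zero k n 0
  refine ⟨(vc k n 0)⁻¹ •
      ιMulti (QFld k n) (n+1) (fun j : Fin (n+1) => dlogQ k n (vc k n j.succ)),
    mem_regForm k n _ hd2 _ _ (reg_c2 k n), ?_⟩
  have hγ : gammaForm k n =
      (∑ l : Fin (n+1), ((-1:QFld k n)^(l:ℕ) * (Vc k n 0)⁻¹) •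
        ιMulti (QFld k n) (n+1) (Fin.cons (dlogQ k n (vc k n 0))
          (fun j : Fin n => dlogQ k n (vc k n ((l.succAbove j).succ)))))
      + (-((Vc k n 0)⁻¹)) •
          ιMulti (QFld k n) (n+1) (fun j : Fin (n+1) => dlogQ k n (vc k n j.succ)) := by
    have h00 : (fun j : Fin (n+1) => dlogQ k n (vc k n ((0:Fin (n+2)).succAbove j)))
        = fun j : Fin (n+1) => dlogQ k n (vc k n j.succ) := by
      funext j; rw [Fin.zero_succAbove]
    have h0s : ∀ l : Fin (n+1),
        (fun j : Fin (n+1) => dlogQ k n (vc k n ((l.succ : Fin (n+2)).succAbove j)))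
        = Fin.cons (dlogQ k n (vc k n 0))
            (fun j : Fin n => dlogQ k n (vc k n ((l.succAbove j).succ))) := by
      intro l; funext j
      induction j using Fin.cases with
      | zero => rw [Fin.succ_succAbove_zero, Fin.cons_zero]
      | succ j => rw [Fin.succ_succAbove_succ, Fin.cons_succ]
    simp only [gammaForm]
    rw [Fin.sum_univ_succ, h00]
    rw [Finset.sum_congr rfl (fun l (_ : l ∈ Finset.univ) => by rw [h0s l])]
    simp only [Fin.val_zero, Fin.val_succ, zsmul_to_ksmul, smul_add, Finset.smul_sum]
    have e_zero : (Vc k n 0)⁻¹ • ((-1:QFld k n)^(0+1)) •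
        ιMulti (QFld k n) (n+1) (fun j : Fin (n+1) => dlogQ k n (vc k n j.succ))
        = (-((Vc k n 0)⁻¹)) •
        ιMulti (QFld k n) (n+1) (fun j : Fin (n+1) => dlogQ k n (vc k n j.succ)) := by
      rw [smul_smul]
      congr 1
      norm_num
    have e_term : ∀ x : Fin (n+1), (Vc k n 0)⁻¹ • ((-1:QFld k n)^((x:ℕ)+1+1)) •
        ιMulti (QFld k n) (n+1) (Fin.cons (dlogQ k n (vc k n 0))
          (fun j : Fin n => dlogQ k n (vc k n ((x.succAbove j).succ))))
        = ((-1:QFld k n)^(x:ℕ) * (Vc k n 0)⁻¹) •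
        ιMulti (QFld k n) (n+1) (Fin.cons (dlogQ k n (vc k n 0))
          (fun j : Fin n => dlogQ k n (vc k n ((x.succAbove j).succ)))) := by
      intro x
      rw [smul_smul]
      congr 1
      rw [pow_succ, pow_succ]
      ring
    rw [Finset.sum_congr rfl (fun x (_ : x ∈ Finset.univ) => e_term x), e_zero]
    exact add_comm _ _
  have hMain : (vc k n 0)⁻¹ • ∑ l : Fin (n+1), ((-1:ℤ)^((l:ℕ)+1)) •
        ιMulti (QFld k n) (n+1) (Fin.cons (dlogQ k n (Vc k n 0))
          (fun j : Fin n => dlogQ k n (vc k n ((l.succAbove j).succ))))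
      = (∑ l : Fin (n+1), ((-1:QFld k n)^(l:ℕ) * (Vc k n 0)⁻¹) •
          ιMulti (QFld k n) (n+1) (Fin.cons (dlogQ k n (vc k n 0))
            (fun j : Fin n => dlogQ k n (vc k n ((l.succAbove j).succ)))))
        + (-((Vc k n 0)⁻¹) - (vc k n 0)⁻¹) •
            ιMulti (QFld k n) (n+1) (fun j : Fin (n+1) => dlogQ k n (vc k n j.succ)) := by
    have hterm : ∀ l : Fin (n+1), ((-1:ℤ)^((l:ℕ)+1)) •
        ιMulti (QFld k n) (n+1) (Fin.cons (dlogQ k n (Vc k n 0))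
          (fun j : Fin n => dlogQ k n (vc k n ((l.succAbove j).succ))))
        = ((-1:QFld k n)^((l:ℕ)+1) * -((Vc k n 0)⁻¹ * vc k n 0)) •
            ιMulti (QFld k n) (n+1) (Fin.cons (dlogQ k n (vc k n 0))
              (fun j : Fin n => dlogQ k n (vc k n ((l.succAbove j).succ))))
          + ((-1:QFld k n)^((l:ℕ)+1) *
              (-((Vc k n 0)⁻¹ * vc k n l.succ) * (-1:QFld k n)^(l:ℕ))) •
              ιMulti (QFld k n) (n+1) (fun j : Fin (n+1) => dlogQ k n (vc k n j.succ)) := by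
      intro l
      rw [zsmul_to_ksmul, key2 k n l, smul_add, smul_smul, smul_smul]
    rw [Finset.sum_congr rfl (fun l (_ : l ∈ Finset.univ) => hterm l),
      Finset.sum_add_distrib, ← Finset.sum_smul, smul_add, Finset.smul_sum, smul_smul]
    congr 1
    · refine Finset.sum_congr rfl (fun l _ => ?_)
      rw [smul_smul]
      congr 1
      rw [pow_succ]
      field_simp
    · congr 1
      have hc2 : ∀ l : Fin (n+1),
          (-1:QFld k n)^((l:ℕ)+1) * (-((Vc k n 0)⁻¹ * vc k n l.succ) * (-1:QFld k n)^(l:ℕ))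
          = (Vc k n 0)⁻¹ * vc k n l.succ := by
        intro l
        have h3 : (-1:QFld k n)^((l:ℕ)+1) * (-1:QFld k n)^(l:ℕ) = -1 := by
          rw [← pow_add]
          have he : (l:ℕ)+1+(l:ℕ) = 2*(l:ℕ)+1 := by omega
          rw [he, pow_succ, pow_mul]
          norm_num
        calc (-1:QFld k n)^((l:ℕ)+1) * (-((Vc k n 0)⁻¹ * vc k n l.succ) * (-1:QFld k n)^(l:ℕ))
            = ((-1:QFld k n)^((l:ℕ)+1) * (-1:QFld k n)^(l:ℕ)) *
              -((Vc k n 0)⁻¹ * vc k n l.succ) := by ring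
          _ = (Vc k n 0)⁻¹ * vc k n l.succ := by rw [h3]; ring
      rw [Finset.sum_congr rfl (fun l (_ : l ∈ Finset.univ) => hc2 l),
        ← Finset.mul_sum, sum_vc_succ]
      field_simp
      ring
  rw [hγ, hMain, sub_smul]
  abel


theorem part1 (i : Fin (n+2)) : ∃ β ∈ regForm k n (MvPolynomial.X i),
    gammaForm k n =
      ((-1 : ℤ) ^ ((i : ℕ) + 1)) •
        ((Vc k n 0)⁻¹ • ∑ l : Fin (n + 1), ((-1 : ℤ) ^ ((l : ℕ) + 1)) •
          ιMulti (QFld k n) (n + 1)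
            (Fin.cons (dlogQ k n (vc k n i))
              (fun j : Fin n => dlogQ k n (vc k n (i.succAbove (l.succAbove j)))))) +
        β := by
  have hd1 : ¬ (MvPolynomial.X i : QPoly k n) ∣ 1 :=
    fun h => not_dvd_part1 k n i (h.trans (one_dvd _))
  refine ⟨((-1:ℤ)^((i:ℕ)+1)) • ((Vc k n 0)⁻¹ •
      ιMulti (QFld k n) (n+1) (fun j : Fin (n+1) => dlogQ k n (vc k n (i.succAbove j)))),
    AddSubgroup.zsmul_mem _ (mem_regForm k n _ hd1 _ _ (reg_c1 k n i)) _, ?_⟩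
  have hterm : ∀ l : Fin (n+1),
      ((-1:ℤ)^(((i.succAbove l : Fin (n+2)):ℕ)+1)) •
        ιMulti (QFld k n) (n+1)
          (fun j : Fin (n+1) => dlogQ k n (vc k n ((i.succAbove l).succAbove j)))
      = ((-1:ℤ)^((i:ℕ)+1)) • (((-1:ℤ)^((l:ℕ)+1)) •
          ιMulti (QFld k n) (n+1) (Fin.cons (dlogQ k n (vc k n i))
            (fun j : Fin n => dlogQ k n (vc k n (i.succAbove (l.succAbove j)))))) := by
    intro l
    obtain ⟨p, hp1, hp2, hp3⟩ := lemB i l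
    have hcons : (Fin.cons (dlogQ k n (vc k n i))
        (fun j : Fin n => dlogQ k n (vc k n (i.succAbove (l.succAbove j))))
          : Fin (n+1) → Ω[QFld k n⁄k])
        = Fin.cons (dlogQ k n (vc k n ((i.succAbove l).succAbove p)))
          (fun j : Fin n => dlogQ k n (vc k n ((i.succAbove l).succAbove (p.succAbove j)))) := by
      funext j
      induction j using Fin.cases with
      | zero => simp [hp1]
      | succ j => simp [hp2 j]
    rw [hcons,
      altCons (ιMulti (QFld k n) (n+1)) (fun j => dlogQ k n (vc k n ((i.succAbove l).succAbove j))) p,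
      smul_smul, smul_smul, ← pow_add, ← pow_add]
    congr 1
    apply pow_neg_one_congr
    omega
  have hsplit : ∑ m : Fin (n+2), ((-1:ℤ)^((m:ℕ)+1)) •
        ιMulti (QFld k n) (n+1) (fun j : Fin (n+1) => dlogQ k n (vc k n (m.succAbove j)))
      = ((-1:ℤ)^((i:ℕ)+1)) •
          ιMulti (QFld k n) (n+1) (fun j : Fin (n+1) => dlogQ k n (vc k n (i.succAbove j)))
        + ∑ l : Fin (n+1), ((-1:ℤ)^(((i.succAbove l : Fin (n+2)):ℕ)+1)) •
          ιMulti (QFld k n) (n+1)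
            (fun j : Fin (n+1) => dlogQ k n (vc k n ((i.succAbove l).succAbove j))) :=
    Fin.sum_univ_succAbove _ i
  simp only [gammaForm]
  rw [hsplit, Finset.sum_congr rfl (fun l _ => hterm l), ← Finset.smul_sum, smul_add,
    smul_comm ((Vc k n 0)⁻¹) ((-1:ℤ)^((i:ℕ)+1)),
    smul_comm ((Vc k n 0)⁻¹) ((-1:ℤ)^((i:ℕ)+1))]
  exact add_comm _ _

/-- residue formulae `Res_{vᵢ=0} γ_{n+1} = (-1)^i γₙ` for `1 ≤ i ≤ n+2`,
and `Res_{v₀=0} γ_{n+1} = γₙ`.  Each residue claim is formalized as a decomposition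
`γ_{n+1} = (sign) · dlog(vᵢ) ∧ γ̃ₙ + β` with `β` regular along `vᵢ = 0`, where `γ̃ₙ` is
the evident lift of the corresponding form `γₙ` in the remaining variables (with the
residual linear relation among them on the hyperplane), so that
`Res_{vᵢ=0} γ_{n+1} = (sign) · γ̃ₙ|_{vᵢ=0} = (sign) · γₙ`. -/
theorem stmt7 :
    -- residue along `vᵢ = 0` for `i = 1, …, n+2` (indexed by `i : Fin (n+2)`,
    -- the paper's index being `i+1`): it equals `(-1)^{i+1}·γₙ`
    (∀ i : Fin (n + 2), ∃ β ∈ regForm k n (MvPolynomial.X i),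
      gammaForm k n =
        ((-1 : ℤ) ^ ((i : ℕ) + 1)) •
          ((Vc k n 0)⁻¹ • ∑ l : Fin (n + 1), ((-1 : ℤ) ^ ((l : ℕ) + 1)) •
            ιMulti (QFld k n) (n + 1)
              (Fin.cons (dlogQ k n (vc k n i))
                (fun j : Fin n => dlogQ k n (vc k n (i.succAbove (l.succAbove j)))))) +
          β) ∧
    -- residue along `v₀ = 0` (the hyperplane `v₁ + ⋯ + v_{n+2} = 0`): it equals `γₙ`
    (∃ β ∈ regForm k n (∑ j, MvPolynomial.X j),
      gammaForm k n =
        (vc k n 0)⁻¹ • ∑ l : Fin (n + 1), ((-1 : ℤ) ^ ((l : ℕ) + 1)) •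
          ιMulti (QFld k n) (n + 1)
            (Fin.cons (dlogQ k n (Vc k n 0))
              (fun j : Fin n => dlogQ k n (vc k n ((l.succAbove j).succ)))) +
          β) := by
  exact ⟨fun i => part1 k n i, part2 k n⟩

end
end

section
/- Let $k$ be a field, $a, b \in k^\times$ with $a + b \neq 0$, and $(u_0, \dots, u_n) \in k^{n+1}$ with all $u_i \neq 0$ and $\sum u_i = 0$. Let $\ell(t) = -\frac{ab}{u_0} t + a + b$ and let $W \subset \mathbb{A}^{n+2}$ be the curve cut out by the ideal $\big((t_1 + t_0)\ell(t_0) - u_0,\; t_2 \ell(t_0) - u_1,\; \dots,\; t_{n+1}\ell(t_0) - u_n\big)$ (coordinates $t_0, \dots, t_{n+1}$). Then: (i) every point of $W$ satisfies $\ell(t_0) \neq 0$ and $W$ equals the parametrized locus $\{(t, -t + u_0/\ell(t), u_1/\ell(t), \dots, u_n/\ell(t))\}$; (ii) the intersection of $W$ with the face $t_0 = 0$ is the single point $\frac{1}{a+b}(u_0, \dots, u_n)$; (iii) the intersection of $W$ with the face $t_0 + t_1 = 0$ (equivalently, the solutions of $-t + u_0/\ell(t) = 0$) consists of the two points $\frac{1}{a}(u_0,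 \dots, u_n)$ and $\frac{1}{b}(u_0, \dots, u_n)$ (with multiplicity, coinciding if $a = b$); (iv) $W$ does not meet the faces $t_i = 0$ for $i \geq 2$. -/
/-! On `W` the equations force `ℓ(t₀) ≠ 0` (as `u₀ ≠ 0`), so every coordinate but `t₀` is solved
for: `W` is the graph of `t ↦ (-t + u₀/ℓ(t), u₁/ℓ(t), …, uₙ/ℓ(t))`, and the coordinate sum is
`(∑ uᵢ)/ℓ(t) = 0`. The faces are then read off the parametrization: `ℓ(0) = a + b`, and the second
coordinate vanishes iff `t ℓ(t) = u₀`, i.e. `(a t - u₀)(b t - u₀) = 0`, where `ℓ(u₀/a) = a` and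
`ℓ(u₀/b) = b`. -/

noncomputable section

variable {k : Type*} [Field k]

section Curve

variable {n : ℕ} (ℓ : k → k) (u : Fin (n + 1) → k)

def OnCurve (y : Fin (n + 2) → k) : Prop :=
  (y 1 + y 0) * ℓ (y 0) = u 0 ∧ ∀ j : Fin n, y j.succ.succ * ℓ (y 0) = u j.succ

def curveParam (t : k) : Fin (n + 2) → k :=
  Fin.cons t (Fin.cons (-t + u 0 / ℓ t) fun j : Fin n => u j.succ / ℓ t)

variable {ℓ u}

@[simp]
lemma curveParam_zero (t : k) : curveParam ℓ u t 0 = t := rfl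

@[simp]
lemma curveParam_one (t : k) : curveParam ℓ u t 1 = -t + u 0 / ℓ t := rfl

@[simp]
lemma curveParam_succ_succ (t : k) (j : Fin n) :
    curveParam ℓ u t j.succ.succ = u j.succ / ℓ t := rfl

lemma curveParam_succ_of_zero (i : Fin (n + 1)) : curveParam ℓ u 0 i.succ = u i / ℓ 0 :=
  Fin.cases (by rw [Fin.succ_zero_eq_one, curveParam_one, neg_zero, zero_add]) (fun _ => rfl) i

lemma sum_curveParam (t : k) : ∑ i, curveParam ℓ u t i = (∑ i, u i) / ℓ t := by
  simp only [Fin.sum_univ_succ, Fin.succ_zero_eq_one, curveParam_zero, curveParam_one,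
    curveParam_succ_succ]
  rw [add_div, Finset.sum_div]
  ring

lemma onCurve_curveParam {t : k} (ht : ℓ t ≠ 0) : OnCurve ℓ u (curveParam ℓ u t) := by
  refine ⟨?_, fun j => ?_⟩
  · simp only [curveParam_zero, curveParam_one, neg_add_cancel_comm]
    exact div_mul_cancel₀ _ ht
  · exact div_mul_cancel₀ _ ht

namespace OnCurve

variable {y : Fin (n + 2) → k}

lemma ell_ne_zero (hy : OnCurve ℓ u y) (hu : u 0 ≠ 0) : ℓ (y 0) ≠ 0 :=
  right_ne_zero_of_mul (hy.1 ▸ hu)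

lemma eq_curveParam (hy : OnCurve ℓ u y) (hℓ : ℓ (y 0) ≠ 0) : y = curveParam ℓ u (y 0) := by
  funext i
  refine Fin.cases rfl (fun i => Fin.cases ?_ (fun j => ?_) i) i
  · rw [Fin.succ_zero_eq_one, curveParam_one, eq_neg_add_iff_add_eq, add_comm]
    exact eq_div_of_mul_eq hℓ hy.1
  · exact eq_div_of_mul_eq hℓ (hy.2 j)

lemma tail_ne_zero (hy : OnCurve ℓ u y) (j : Fin n) (hu : u j.succ ≠ 0) : y j.succ.succ ≠ 0 :=
  left_ne_zero_of_mul ((hy.2 j).symm ▸ hu)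

end OnCurve

end Curve

lemma eq_div_or_eq_div_of_mul_eq {a b c t : k} (ha : a ≠ 0) (hb : b ≠ 0) (hc : c ≠ 0)
    (h : t * (-(a * b / c) * t + a + b) = c) : t = c / a ∨ t = c / b := by
  have hfactor : (a * t - c) * (b * t - c) = 0 := by
    field_simp at h
    linear_combination -h
  rcases mul_eq_zero.mp hfactor with h | h
  · exact .inl (eq_div_of_mul_eq ha (by linear_combination h))
  · exact .inr (eq_div_of_mul_eq hb (by linear_combination h))

theorem stmt17_general {n : ℕ} (a b : k) (ha : a ≠ 0) (hb : b ≠ 0)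
    (u : Fin (n + 1) → k) (hu : ∀ i, u i ≠ 0) (husum : ∑ i, u i = 0)
    (ell : k → k) (hell : ∀ t, ell t = -(a * b / u 0) * t + a + b)
    (onW : (Fin (n + 2) → k) → Prop)
    (honW : ∀ y, onW y ↔
      ((y 1 + y 0) * ell (y 0) = u 0 ∧
        ∀ j : Fin n, y j.succ.succ * ell (y 0) = u j.succ))
    (param : k → Fin (n + 2) → k)
    (hparam : ∀ t, param t =
      Fin.cons t (Fin.cons (-t + u 0 / ell t) (fun j : Fin n => u j.succ / ell t))) :
    -- (o) `W ⊆ Q^{n+1}`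
    (∀ y, onW y → ∑ i, y i = 0) ∧
    -- (i) the closed locus is the parametrized locus
    (∀ y, onW y → ell (y 0) ≠ 0 ∧ y = param (y 0)) ∧
    (∀ t, ell t ≠ 0 → onW (param t)) ∧
    -- (ii) intersection with the face `t₀ = 0`
    (∀ y, onW y → y 0 = 0 → ∀ i : Fin (n + 1), y i.succ = u i / (a + b)) ∧
    -- (iii) intersection with the second face (`y 1 = 0`, i.e. the solutions of
    -- `-t + u₀/ℓ(t) = 0`)
    (∀ y, onW y → y 1 = 0 →
      ((y 0 = u 0 / a ∧ ∀ j : Fin n, y j.succ.succ = u j.succ / a) ∨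
        (y 0 = u 0 / b ∧ ∀ j : Fin n, y j.succ.succ = u j.succ / b))) ∧
    -- (iv) `W` misses the faces `tᵢ = 0`, `i ≥ 2`
    (∀ y, onW y → ∀ j : Fin n, y j.succ.succ ≠ 0) := by
  obtain rfl : onW = OnCurve ell u := funext fun y => propext (honW y)
  obtain rfl : param = curveParam ell u := funext hparam
  have hℓ {y} (hy : OnCurve ell u y) : ell (y 0) ≠ 0 := hy.ell_ne_zero (hu 0)
  refine ⟨fun y hy => ?_, fun y hy => ⟨hℓ hy, hy.eq_curveParam (hℓ hy)⟩,
    fun t ht => onCurve_curveParam ht, fun y hy hy0 i => ?_, fun y hy hy1 => ?_,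
    fun y hy j => hy.tail_ne_zero j (hu j.succ)⟩
  · rw [hy.eq_curveParam (hℓ hy), sum_curveParam, husum, zero_div]
  · rw [hy.eq_curveParam (hℓ hy), hy0, curveParam_succ_of_zero, hell, mul_zero, zero_add]
  · have hquad : y 0 * (-(a * b / u 0) * y 0 + a + b) = u 0 := by
      rw [← hell]
      linear_combination hy.1 - ell (y 0) * hy1
    have htail {c : k} (hc : ell (y 0) = c) (j : Fin n) : y j.succ.succ = u j.succ / c :=
      hc ▸ congrFun (hy.eq_curveParam (hℓ hy)) j.succ.succ
    have hu0 := hu 0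
    rcases eq_div_or_eq_div_of_mul_eq ha hb hu0 hquad with hy0 | hy0
    · exact .inl ⟨hy0, htail (by rw [hell, hy0]; field_simp; ring)⟩
    · exact .inr ⟨hy0, htail (by rw [hell, hy0]; field_simp; ring)⟩

/-- the curve `W ⊆ 𝔸^{n+2}` cut out by the ideal
`((t₁+t₀)ℓ(t₀) - u₀, t₂ℓ(t₀) - u₁, …, t_{n+1}ℓ(t₀) - uₙ)` with
`ℓ(t) = -(ab/u₀)t + a + b`: (o) it lies on `Q^{n+1} = {∑ tᵢ = 0}`;
(i) every point of `W` satisfies `ℓ(t₀) ≠ 0` and `W` is exactly the parametrized locus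
`t ↦ (t, -t + u₀/ℓ(t), u₁/ℓ(t), …, uₙ/ℓ(t))`;
(ii) on the face `t₀ = 0` the remaining coordinates are `(1/(a+b))·(u₀, …, uₙ)`;
(iii) on the second face (vanishing of the second coordinate `-t + u₀/ℓ(t)`,
as in the quadratic equation of the paper) one has `t₀ = u₀/a` or `t₀ = u₀/b`, the remaining
coordinates then being `(1/a)·u` resp. `(1/b)·u`;
(iv) `W` does not meet the faces `tᵢ = 0` for `i ≥ 2`. -/
theorem stmt17 {n : ℕ} (a b : k) (ha : a ≠ 0) (hb : b ≠ 0) (hab : a + b ≠ 0)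
    (u : Fin (n + 1) → k) (hu : ∀ i, u i ≠ 0) (husum : ∑ i, u i = 0)
    (ell : k → k) (hell : ∀ t, ell t = -(a * b / u 0) * t + a + b)
    (onW : (Fin (n + 2) → k) → Prop)
    (honW : ∀ y, onW y ↔
      ((y 1 + y 0) * ell (y 0) = u 0 ∧
        ∀ j : Fin n, y j.succ.succ * ell (y 0) = u j.succ))
    (param : k → Fin (n + 2) → k)
    (hparam : ∀ t, param t =
      Fin.cons t (Fin.cons (-t + u 0 / ell t) (fun j : Fin n => u j.succ / ell t))) :
    -- (o) `W ⊆ Q^{n+1}`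
    (∀ y, onW y → ∑ i, y i = 0) ∧
    -- (i) the closed locus is the parametrized locus
    (∀ y, onW y → ell (y 0) ≠ 0 ∧ y = param (y 0)) ∧
    (∀ t, ell t ≠ 0 → onW (param t)) ∧
    -- (ii) intersection with the face `t₀ = 0`
    (∀ y, onW y → y 0 = 0 → ∀ i : Fin (n + 1), y i.succ = u i / (a + b)) ∧
    -- (iii) intersection with the second face (`y 1 = 0`, i.e. the solutions of
    -- `-t + u₀/ℓ(t) = 0`)
    (∀ y, onW y → y 1 = 0 →
      ((y 0 = u 0 / a ∧ ∀ j : Fin n, y j.succ.succ = u j.succ / a) ∨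
        (y 0 = u 0 / b ∧ ∀ j : Fin n, y j.succ.succ = u j.succ / b))) ∧
    -- (iv) `W` misses the faces `tᵢ = 0`, `i ≥ 2`
    (∀ y, onW y → ∀ j : Fin n, y j.succ.succ ≠ 0) :=
  stmt17_general a b ha hb u hu husum ell hell onW honW param hparam
end
end

section
/- Let $k$ be a field, $a \in k \setminus \{0, -1\}$, $b_2, \dots, b_{n-1} \in k^\times$, set $b := -a$, and let $u = (u_1, \dots, u_{n-1})$ with all $u_i \neq 0$ and $\sum_{i=1}^{n-1} u_i = 1$. Consider the parametrized curve $\Gamma(b, u)(t) = \big(-\tfrac{1}{b} + t,\; \tfrac{1}{b-1},\; -t,\; \tfrac{-u_1}{b(b-1)},\; \dots,\; \tfrac{-u_{n-1}}{b(b-1)}\big) \subset Q^{n+1}$. Then: (i) the coordinates of $\Gamma(b,u)(t)$ sum to $0$ for all $t$; (ii) $\partial \Gamma(b,u) = (1-b) \star (-1, 1 - \tfrac{1}{b}, \tfrac{u_1}{b}, \dots, \tfrac{u_{n-1}}{b}) + b \star (-1, \tfrac{b}{b-1}, \tfrac{-u_1}{b-1}, \dots, \tfrac{-u_{n-1}}{b-1})$,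 where $x \star (v_0, \dots, v_n) := (v_0/x, \dots, v_n/x)$, and the two boundary points arise from setting the first coordinate, resp. the third coordinate, of $\Gamma(b,u)(t)$ to zero. -/
noncomputable section


theorem insertNth_two {k : Type*} {m : ℕ} (x : k) (w : Fin (m+2) → k) :
    Fin.insertNth (2 : Fin (m+3)) x w =
      (Fin.cons (w 0) (Fin.cons (w 1) (Fin.cons x (fun j : Fin m => w j.succ.succ)) :
        Fin (m+2) → k) : Fin (m+3) → k) := by
  have h2 : (2 : Fin (m+3)) = (Fin.succ (Fin.succ 0)) := by simp [Fin.ext_iff]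
  funext i
  induction i using Fin.cases with
  | zero =>
    rw [show (0 : Fin (m+3)) = (2 : Fin (m+3)).succAbove 0 by rw [h2, Fin.succ_succAbove_zero],
      Fin.insertNth_apply_succAbove]; rfl
  | succ i =>
    induction i using Fin.cases with
    | zero =>
      rw [show (Fin.succ 0 : Fin (m+3)) = (2 : Fin (m+3)).succAbove (Fin.succ 0) by
        rw [h2, Fin.succ_succAbove_succ, Fin.succ_succAbove_zero], Fin.insertNth_apply_succAbove]; rfl
    | succ i =>
      induction i using Fin.cases with
      | zero => rw [h2, Fin.cons_succ, Fin.cons_succ, Fin.cons_zero, Fin.insertNth_apply_same]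
      | succ i =>
        rw [show (i.succ.succ.succ : Fin (m+3)) = (2 : Fin (m+3)).succAbove i.succ.succ by
          rw [h2, Fin.succ_succAbove_succ, Fin.succ_succAbove_succ, Fin.zero_succAbove], Fin.insertNth_apply_succAbove]; rfl


/-- the parametrized curve
`Γ(b,u)(t) = (-1/b + t, 1/(b-1), -t, -u₁/(b(b-1)), …, -u_{n-1}/(b(b-1))) ⊆ Q^{n+1}`
(with `b = -a`, `a ∉ {0, -1}`, all `uᵢ ≠ 0`, `∑ uᵢ = 1`; here `m = n - 1`):
(i) its coordinates sum to `0`;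
(ii) a coordinate vanishes only for the first coordinate at `t = 1/b` and the third
coordinate at `t = 0`, and at those parameters the curve passes through
`∂₀Γ = (1-b) ⋆ (-1, 1 - 1/b, u₁/b, …, u_{n-1}/b)` (a `0` inserted in slot `0`) and
`∂₂Γ = b ⋆ (-1, b/(b-1), -u₁/(b-1), …, -u_{n-1}/(b-1))` (a `0` inserted in slot `2`),
where `x ⋆ v = (v₀/x, …, vₙ/x)`. -/
theorem stmt19 {k : Type*} [Field k] {m : ℕ} (a : k) (ha0 : a ≠ 0) (ha1 : a ≠ -1)
    (b : k) (hb : b = -a)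
    (u : Fin m → k) (hu : ∀ i, u i ≠ 0) (husum : ∑ i, u i = 1)
    (Γ : k → Fin (m + 3) → k)
    (hΓ : ∀ t, Γ t =
      Fin.cons (-1 / b + t) (Fin.cons (1 / (b - 1)) (Fin.cons (-t)
        (fun i : Fin m => -u i / (b * (b - 1)))))) :
    -- (i) the coordinates sum to zero
    (∀ t, ∑ i, Γ t i = 0) ∧
    -- (ii) classification of the intersections with the faces
    (∀ t (i : Fin (m + 3)), Γ t i = 0 → (i = 0 ∧ t = 1 / b) ∨ (i = 2 ∧ t = 0)) ∧
    -- the boundary point on the face `t₀ = 0` is `(1-b) ⋆ (-1, 1 - 1/b, u/b)`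
    (Γ (1 / b) = Fin.insertNth 0 0
      (fun i => (Fin.cons (-1 : k) (Fin.cons (1 - 1 / b) (fun j : Fin m => u j / b)) :
          Fin (m + 2) → k) i / (1 - b))) ∧
    -- the boundary point on the face `t₂ = 0` is `b ⋆ (-1, b/(b-1), -u/(b-1))`
    (Γ 0 = Fin.insertNth 2 0
      (fun i => (Fin.cons (-1 : k) (Fin.cons (b / (b - 1)) (fun j : Fin m => -u j / (b - 1))) :
          Fin (m + 2) → k) i / b)) := by
  have hb0 : b ≠ 0 := by rw [hb]; exact neg_ne_zero.mpr ha0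
  have hb1 : b - 1 ≠ 0 := by
    rw [hb]; intro h; apply ha1; linear_combination -h
  have h1b : (1 : k) - b ≠ 0 := by intro h; apply hb1; linear_combination -h
  refine ⟨?_, ?_, ?_, ?_⟩
  · intro t
    rw [hΓ]
    rw [Fin.sum_cons, Fin.sum_cons, Fin.sum_cons]
    have : ∑ i : Fin m, -u i / (b * (b - 1)) = -1 / (b * (b-1)) := by
      rw [← Finset.sum_div, Finset.sum_neg_distrib, husum]
    rw [this]
    field_simp
    ring
  · intro t i h
    rw [hΓ] at h
    induction i using Fin.cases with
    | zero =>
      rw [Fin.cons_zero] at h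
      exact Or.inl ⟨rfl, by field_simp at h ⊢; linear_combination h⟩
    | succ i =>
      rw [Fin.cons_succ] at h
      induction i using Fin.cases with
      | zero =>
        rw [Fin.cons_zero] at h
        exact absurd h (one_div_ne_zero hb1)
      | succ i =>
        rw [Fin.cons_succ] at h
        induction i using Fin.cases with
        | zero =>
          rw [Fin.cons_zero, neg_eq_zero] at h
          refine Or.inr ⟨by simp [Fin.ext_iff], h⟩
        | succ i =>
          rw [Fin.cons_succ] at h
          exact absurd h (div_ne_zero (neg_ne_zero.mpr (hu i)) (mul_ne_zero hb0 hb1))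
  · rw [hΓ, Fin.insertNth_zero]
    simp only [cast_eq]
    funext i
    induction i using Fin.cases with
    | zero => simp; field_simp; ring
    | succ i =>
      rw [Fin.cons_succ, Fin.cons_succ]
      induction i using Fin.cases with
      | zero => rw [Fin.cons_zero, Fin.cons_zero]; field_simp; ring
      | succ i =>
        rw [Fin.cons_succ, Fin.cons_succ]
        induction i using Fin.cases with
        | zero => rw [Fin.cons_zero, Fin.cons_zero]; field_simp; ring
        | succ i => rw [Fin.cons_succ, Fin.cons_succ]; field_simp; ring
  · rw [hΓ, insertNth_two]
    funext i
    induction i using Fin.cases with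
    | zero => rw [Fin.cons_zero, Fin.cons_zero]; simp
    | succ i =>
      rw [Fin.cons_succ, Fin.cons_succ]
      induction i using Fin.cases with
      | zero => rw [Fin.cons_zero, Fin.cons_zero]; simp [Fin.cons_succ]; field_simp
      | succ i =>
        rw [Fin.cons_succ, Fin.cons_succ]
        induction i using Fin.cases with
        | zero => rw [Fin.cons_zero, Fin.cons_zero]; simp
        | succ i => rw [Fin.cons_succ, Fin.cons_succ]; simp [Fin.cons_succ]; field_simp

end
end
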